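/- Let G be an irreducible graph-directed matrix product system. Then there exist constants A > 0 and r > 0 such that for any t₁, t₂ ∈ (0,1), any η₁ ∈ Σ_{t₁}, and any η₂ ∈ Σ_{t₂}, there are finite paths φ and ψ such that η₁φη₂ψ is a path belonging to Σ_{t₁t₂r} and ‖T(η₁φη₂ψ)‖ ≤ A·‖T(η₁)‖·‖T(η₂)‖. -/

import Mathlib

open Filter Topology

/-- A graph-directed matrix product system: a finite directed graph (multiple
edges allowed) with a dimension for each vertex, a non-negative transition
matrix for each edge (encoded as a block of a big matrix indexed by
`(v : V) × Fin (dim v)`, supported on the `(src e, tgt e)` block), and a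
weight `W e ∈ (0,1)` for each edge. -/
structure GMPS where
  V : Type
  E : Type
  [fintV : Fintype V]
  [decV : DecidableEq V]
  [fintE : Fintype E]
  [decE : DecidableEq E]
  src : E → V
  tgt : E → V
  dim : V → ℕ
  dim_pos : ∀ v, 0 < dim v
  T : E → Matrix ((v : V) × Fin (dim v)) ((v : V) × Fin (dim v)) ℝ
  T_nonneg : ∀ e i j, 0 ≤ T e i j
  T_block : ∀ e i j, T e i j ≠ 0 → i.1 = src e ∧ j.1 = tgt e
  W : E → ℝ
  W_pos : ∀ e, 0 < W e
  W_lt_one : ∀ e, W e < 1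

attribute [instance] GMPS.fintV GMPS.decV GMPS.fintE GMPS.decE

namespace GMPS

variable (G : GMPS)

/-- The global index type for the block matrices. -/
abbrev Idx := (v : G.V) × Fin (G.dim v)

/-- A finite sequence of edges is a path when consecutive edges are compatible. -/
def IsPath (l : List G.E) : Prop := l.Chain' fun e e' => G.tgt e = G.src e'

/-- A (nonempty) path starts at the source of its first edge. -/
def startsAt (l : List G.E) (v : G.V) : Prop := ∃ e, l.head? = some e ∧ G.src e = v

/-- A (nonempty) path ends at the target of its last edge. -/
def endsAt (l : List G.E) (v : G.V) : Prop := ∃ e, l.getLast? = some e ∧ G.tgt e = v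

/-- `l` is a (nonempty) path from `v₁` to `v₂`. -/
def PathFrom (l : List G.E) (v₁ v₂ : G.V) : Prop :=
  G.IsPath l ∧ G.startsAt l v₁ ∧ G.endsAt l v₂

/-- The underlying graph is strongly connected. -/
def StronglyConnected : Prop := ∀ v₁ v₂ : G.V, ∃ l, G.PathFrom l v₁ v₂

/-- The product `T(e₁) ⋯ T(eₙ)` of the transition matrices along a path. -/
noncomputable def Tp (l : List G.E) : Matrix G.Idx G.Idx ℝ := (l.map G.T).prod

/-- The product `W(e₁) ⋯ W(eₙ)` of the weights along a path. -/
def Wp (l : List G.E) : ℝ := (l.map G.W).prod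

/-- The norm of a matrix: the sum of its entries. -/
noncomputable def mnorm (M : Matrix G.Idx G.Idx ℝ) : ℝ := ∑ i, ∑ j, M i j

/-- `Σ_t`: the paths `η` with `W(η) < t ≤ W(η⁻)` and `‖T(η)‖ > 0`. -/
def SigmaT (t : ℝ) : Set (List G.E) :=
  {l | G.IsPath l ∧ l ≠ [] ∧ G.Wp l < t ∧ t ≤ G.Wp l.dropLast ∧ 0 < G.mnorm (G.Tp l)}

/-- `H` is an irreducibility family: for all vertices `v₁, v₂` and all indices
`i ≤ d(v₁)`, `j ≤ d(v₂)` there is `γ ∈ H` from `v₁` to `v₂` with `T(γ)_{i,j} > 0`. -/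
def IrredFamily (H : Finset (List G.E)) : Prop :=
  ∀ (v₁ v₂ : G.V) (i : Fin (G.dim v₁)) (j : Fin (G.dim v₂)),
    ∃ γ ∈ H, G.PathFrom γ v₁ v₂ ∧ 0 < G.Tp γ ⟨v₁, i⟩ ⟨v₂, j⟩

/-- The matrix product system is irreducible. -/
def Irreducible : Prop := ∃ H : Finset (List G.E), G.IrredFamily H

/-- An infinite path in the graph. -/
def IsInfPath (γ : ℕ → G.E) : Prop := ∀ n, G.tgt (γ n) = G.src (γ (n + 1))

/-- The prefix `γ|n` of an infinite path. -/
def pfx (γ : ℕ → G.E) (n : ℕ) : List G.E := (List.range n).map γ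

/-- The quotient `log ‖T(γ|n)‖ / log W(γ|n)` whose `liminf`/`limsup`/limit are
the lower/upper Lyapunov exponent and Lyapunov exponent of `γ`. -/
noncomputable def lyapQ (γ : ℕ → G.E) (n : ℕ) : ℝ :=
  Real.log (G.mnorm (G.Tp (G.pfx γ n))) / Real.log (G.Wp (G.pfx γ n))

/-- `min_{η ∈ Σ_t} log ‖T(η)‖ / log t`. -/
noncomputable def minQ (t : ℝ) : ℝ :=
  sInf ((fun l => Real.log (G.mnorm (G.Tp l)) / Real.log t) '' G.SigmaT t)

/-- `max_{η ∈ Σ_t} log ‖T(η)‖ / log t`. -/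
noncomputable def maxQ (t : ℝ) : ℝ :=
  sSup ((fun l => Real.log (G.mnorm (G.Tp l)) / Real.log t) '' G.SigmaT t)

/-- The spectral radius of a (non-negative) square matrix. -/
noncomputable def spr (M : Matrix G.Idx G.Idx ℝ) : ℝ := (spectralRadius ℝ M).toReal

end GMPS

/-!
Take positive entries `T(η₁)_{ij}` and `T(η₂)_{km}`. Irreducibility provides a path `φ` with
`T(φ)_{jk} > 0` and a loop at `m` with positive diagonal entry; iterating the loop gives a path
`ρ` with `T(ρ)_{mm} > 0` and weight below `r`. Then `η₁φη₂ρ` has positive norm and weight below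
`t₁t₂r`, while `η₁φη₂` has weight at least `t₁t₂r` once `r` is below `(min W)² · W(φ)`, so the
shortest prefix `ψ` of `ρ` pushing the weight below `t₁t₂r` puts `η₁φη₂ψ` in `Σ_{t₁t₂r}`. Being a
path is automatic: the block support of the `T(e)` kills every product along a broken chain of
edges. Finally `φ` and `ψ` are prefixes of finitely many fixed paths, so their norms are bounded,
and the sum-of-entries norm is submultiplicative on non-negative matrices.
-/

section NonnegMatrix

variable {n : Type*} [Fintype n] {M N : Matrix n n ℝ}

theorem Matrix.apply_mul_apply_le_mul_apply (hM : ∀ i j, 0 ≤ M i j) (hN : ∀ i j, 0 ≤ N i j)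
    (i j k : n) : M i j * N j k ≤ (M * N) i k :=
  Finset.single_le_sum (fun c _ => mul_nonneg (hM i c) (hN c k)) (Finset.mem_univ j)

theorem Matrix.apply_le_sum_sum (hM : ∀ i j, 0 ≤ M i j) (i j : n) :
    M i j ≤ ∑ i, ∑ j, M i j :=
  calc M i j ≤ ∑ j, M i j := Finset.single_le_sum (fun c _ => hM i c) (Finset.mem_univ j)
    _ ≤ ∑ i, ∑ j, M i j :=
      Finset.single_le_sum (fun c _ => Finset.sum_nonneg fun j _ => hM c j) (Finset.mem_univ i)

theorem Matrix.exists_apply_pos_of_sum_sum_pos (h : 0 < ∑ i, ∑ j, M i j) :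
    ∃ i j, 0 < M i j := by
  by_contra! hM
  exact h.not_ge (Finset.sum_nonpos fun i _ => Finset.sum_nonpos fun j _ => hM i j)

theorem Matrix.sum_sum_mul_le (hM : ∀ i j, 0 ≤ M i j) (hN : ∀ i j, 0 ≤ N i j) :
    ∑ i, ∑ k, (M * N) i k ≤ (∑ i, ∑ j, M i j) * ∑ j, ∑ k, N j k := by
  calc ∑ i, ∑ k, (M * N) i k = ∑ i, ∑ j, M i j * ∑ k, N j k := by
        simp only [Matrix.mul_apply, Finset.mul_sum]
        exact Finset.sum_congr rfl fun i _ => Finset.sum_comm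
    _ ≤ ∑ i, ∑ j, M i j * ∑ j, ∑ k, N j k :=
        Finset.sum_le_sum fun i _ => Finset.sum_le_sum fun j _ =>
          mul_le_mul_of_nonneg_left (Finset.single_le_sum
            (fun c _ => Finset.sum_nonneg fun k _ => hN c k) (Finset.mem_univ j)) (hM i j)
    _ = (∑ i, ∑ j, M i j) * ∑ j, ∑ k, N j k := by simp only [Finset.sum_mul]

end NonnegMatrix

theorem exists_pos_le_of_finite {ι : Type*} [Finite ι] {f : ι → ℝ} (hf : ∀ i, 0 < f i) :
    ∃ c, 0 < c ∧ ∀ i, c ≤ f i := by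
  cases isEmpty_or_nonempty ι
  · exact ⟨1, one_pos, isEmptyElim⟩
  · obtain ⟨i₀, hi₀⟩ := Finite.exists_min f
    exact ⟨f i₀, hf i₀, hi₀⟩

namespace GMPS

variable {G : GMPS}

@[simp]
theorem Tp_nil : G.Tp [] = 1 := rfl

@[simp]
theorem Tp_append (l₁ l₂ : List G.E) : G.Tp (l₁ ++ l₂) = G.Tp l₁ * G.Tp l₂ := by
  simp [Tp]

theorem Tp_cons (e : G.E) (l : List G.E) : G.Tp (e :: l) = G.T e * G.Tp l := by
  simp [Tp]

@[simp]
theorem Wp_append (l₁ l₂ : List G.E) : G.Wp (l₁ ++ l₂) = G.Wp l₁ * G.Wp l₂ := by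
  simp [Wp]

theorem Wp_cons (e : G.E) (l : List G.E) : G.Wp (e :: l) = G.W e * G.Wp l := by
  simp [Wp]

theorem Wp_pos (l : List G.E) : 0 < G.Wp l :=
  List.prod_pos fun _ hw => by
    obtain ⟨e, -, rfl⟩ := List.mem_map.mp hw
    exact G.W_pos e

theorem Wp_le_one (l : List G.E) : G.Wp l ≤ 1 := by
  induction l with
  | nil => rfl
  | cons e l ih => rw [Wp_cons]; exact mul_le_one₀ (G.W_lt_one e).le (G.Wp_pos l).le ih

theorem Wp_lt_one {l : List G.E} (hl : l ≠ []) : G.Wp l < 1 := by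
  obtain ⟨e, l, rfl⟩ := List.exists_cons_of_ne_nil hl
  rw [Wp_cons]
  exact mul_lt_one_of_nonneg_of_lt_one_left (G.W_pos e).le (G.W_lt_one e) (G.Wp_le_one l)

theorem Tp_nonneg (l : List G.E) (i j : G.Idx) : 0 ≤ G.Tp l i j := by
  induction l generalizing i with
  | nil => by_cases h : i = j <;> simp [h]
  | cons e l ih =>
    rw [Tp_cons]
    exact Finset.sum_nonneg fun c _ => mul_nonneg (G.T_nonneg e i c) (ih c)

theorem Tp_apply_le_mnorm (l : List G.E) (i j : G.Idx) : G.Tp l i j ≤ G.mnorm (G.Tp l) :=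
  Matrix.apply_le_sum_sum (G.Tp_nonneg l) i j

theorem mnorm_Tp_nonneg (l : List G.E) : 0 ≤ G.mnorm (G.Tp l) :=
  Finset.sum_nonneg fun i _ => Finset.sum_nonneg fun j _ => G.Tp_nonneg l i j

theorem mnorm_Tp_append_le (l₁ l₂ : List G.E) :
    G.mnorm (G.Tp (l₁ ++ l₂)) ≤ G.mnorm (G.Tp l₁) * G.mnorm (G.Tp l₂) := by
  rw [Tp_append]
  exact Matrix.sum_sum_mul_le (G.Tp_nonneg l₁) (G.Tp_nonneg l₂)

theorem mnorm_Tp_append_le_of_le {l₁ l₂ : List G.E} {a b : ℝ}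
    (h₁ : G.mnorm (G.Tp l₁) ≤ a) (h₂ : G.mnorm (G.Tp l₂) ≤ b) :
    G.mnorm (G.Tp (l₁ ++ l₂)) ≤ a * b :=
  (mnorm_Tp_append_le l₁ l₂).trans
    (mul_le_mul h₁ h₂ (mnorm_Tp_nonneg l₂) ((mnorm_Tp_nonneg l₁).trans h₁))

theorem mnorm_Tp_pos_of_append {l₁ l₂ : List G.E} (h : 0 < G.mnorm (G.Tp (l₁ ++ l₂))) :
    0 < G.mnorm (G.Tp l₁) :=
  pos_of_mul_pos_left (h.trans_le (mnorm_Tp_append_le l₁ l₂)) (mnorm_Tp_nonneg l₂)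

theorem Tp_append_apply_pos {l₁ l₂ : List G.E} {i j k : G.Idx} (h₁ : 0 < G.Tp l₁ i j)
    (h₂ : 0 < G.Tp l₂ j k) : 0 < G.Tp (l₁ ++ l₂) i k := by
  rw [Tp_append]
  exact (mul_pos h₁ h₂).trans_le
    (Matrix.apply_mul_apply_le_mul_apply (G.Tp_nonneg l₁) (G.Tp_nonneg l₂) i j k)

theorem isPath_of_Tp_apply_ne_zero {l : List G.E} {i j : G.Idx} (h : G.Tp l i j ≠ 0) :
    G.IsPath l ∧ ∀ e ∈ l.head?, i.1 = G.src e := by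
  induction l generalizing i with
  | nil => exact ⟨List.IsChain.nil, by simp⟩
  | cons e l ih =>
    rw [Tp_cons, Matrix.mul_apply] at h
    obtain ⟨c, -, hc⟩ := Finset.exists_ne_zero_of_sum_ne_zero h
    obtain ⟨hi, hce⟩ := G.T_block e i c (left_ne_zero_of_mul hc)
    obtain ⟨hl, hcl⟩ := ih (right_ne_zero_of_mul hc)
    refine ⟨?_, by simpa using hi⟩
    cases l with
    | nil => exact List.IsChain.singleton e
    | cons e' l => exact List.isChain_cons_cons.mpr ⟨hce.symm.trans (hcl e' rfl), hl⟩

theorem isPath_of_mnorm_Tp_pos {l : List G.E} (h : 0 < G.mnorm (G.Tp l)) : G.IsPath l := by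
  obtain ⟨i, j, hij⟩ := Matrix.exists_apply_pos_of_sum_sum_pos h
  exact (isPath_of_Tp_apply_ne_zero hij.ne').1

theorem Tp_flatten_replicate_apply (γ : List G.E) (m : G.Idx) (K : ℕ) :
    G.Tp γ m m ^ K ≤ G.Tp (List.replicate K γ).flatten m m := by
  induction K with
  | zero => simp
  | succ K ih =>
    rw [List.replicate_succ, List.flatten_cons, Tp_append, pow_succ']
    exact (mul_le_mul_of_nonneg_left ih (G.Tp_nonneg γ m m)).trans
      (Matrix.apply_mul_apply_le_mul_apply (G.Tp_nonneg _) (G.Tp_nonneg _) m m m)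

theorem Wp_flatten_replicate (γ : List G.E) (K : ℕ) :
    G.Wp (List.replicate K γ).flatten = G.Wp γ ^ K := by
  induction K with
  | zero => rfl
  | succ K ih => rw [List.replicate_succ, List.flatten_cons, Wp_append, ih, pow_succ']

theorem exists_loop_Wp_lt {γ : List G.E} (hγ : γ ≠ []) {m : G.Idx} (hm : 0 < G.Tp γ m m)
    {ε : ℝ} (hε : 0 < ε) : ∃ ρ, 0 < G.Tp ρ m m ∧ G.Wp ρ < ε := by
  obtain ⟨K, hK⟩ := exists_pow_lt_of_lt_one hε (G.Wp_lt_one hγ)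
  exact ⟨_, (pow_pos hm K).trans_le (Tp_flatten_replicate_apply γ m K),
    (Wp_flatten_replicate γ K).trans_lt hK⟩

theorem mul_le_Wp_of_le_Wp_dropLast {l : List G.E} (hl : l ≠ []) {t c : ℝ} (hc : 0 ≤ c)
    (hcW : ∀ e, c ≤ G.W e) (ht : t ≤ G.Wp l.dropLast) : t * c ≤ G.Wp l := by
  conv_rhs => rw [← List.dropLast_append_getLast hl]
  simpa [Wp] using mul_le_mul ht (hcW (l.getLast hl)) hc (G.Wp_pos _).le

theorem mul_le_Wp_append_append {η₁ φ η₂ : List G.E} {t₁ t₂ c c' : ℝ}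
    (h₁ : η₁ ∈ G.SigmaT t₁) (h₂ : η₂ ∈ G.SigmaT t₂) (ht₂ : 0 ≤ t₂)
    (hc : 0 ≤ c) (hcW : ∀ e, c ≤ G.W e) (hc' : 0 ≤ c') (hφ : c' ≤ G.Wp φ) :
    t₁ * t₂ * (c * c * c') ≤ G.Wp (η₁ ++ φ ++ η₂) := by
  have hη₁ := mul_le_Wp_of_le_Wp_dropLast h₁.2.1 hc hcW h₁.2.2.2.1
  have hη₂ := mul_le_Wp_of_le_Wp_dropLast h₂.2.1 hc hcW h₂.2.2.2.1
  calc t₁ * t₂ * (c * c * c') = t₁ * c * c' * (t₂ * c) := by ring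
    _ ≤ G.Wp η₁ * G.Wp φ * G.Wp η₂ :=
        mul_le_mul (mul_le_mul hη₁ hφ hc' (G.Wp_pos η₁).le) hη₂ (by positivity)
          (mul_pos (G.Wp_pos η₁) (G.Wp_pos φ)).le
    _ = G.Wp (η₁ ++ φ ++ η₂) := by simp only [Wp_append]

theorem Wp_append_append_append_lt {η₁ φ η₂ ρ : List G.E} {t₁ t₂ r : ℝ}
    (h₁ : η₁ ∈ G.SigmaT t₁) (h₂ : η₂ ∈ G.SigmaT t₂) (hρ : G.Wp ρ < r) :
    G.Wp (η₁ ++ φ ++ η₂ ++ ρ) < t₁ * t₂ * r := by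
  simp only [Wp_append]
  calc G.Wp η₁ * G.Wp φ * G.Wp η₂ * G.Wp ρ ≤ G.Wp η₁ * G.Wp η₂ * G.Wp ρ := by
        gcongr
        · exact (G.Wp_pos ρ).le
        · exact (G.Wp_pos η₂).le
        · exact mul_le_of_le_one_right (G.Wp_pos η₁).le (G.Wp_le_one φ)
    _ < t₁ * t₂ * r := mul_lt_mul'' (mul_lt_mul'' h₁.2.2.1 h₂.2.2.1 (G.Wp_pos η₁).le
        (G.Wp_pos η₂).le) hρ (mul_pos (G.Wp_pos η₁) (G.Wp_pos η₂)).le (G.Wp_pos ρ).le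

theorem exists_prefix_append_mem_SigmaT {p ρ : List G.E} {t : ℝ} (hp : t ≤ G.Wp p)
    (hρ : G.Wp (p ++ ρ) < t) (hT : 0 < G.mnorm (G.Tp (p ++ ρ))) :
    ∃ ψ, ψ <+: ρ ∧ p ++ ψ ∈ G.SigmaT t := by
  induction ρ using List.reverseRecOn with
  | nil => exact absurd hp (by simpa using hρ)
  | append_singleton ρ e ih =>
    rw [← List.append_assoc] at hρ hT
    by_cases h : G.Wp (p ++ ρ) < t
    · obtain ⟨ψ, hψ, hmem⟩ := ih h (mnorm_Tp_pos_of_append hT)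
      exact ⟨ψ, hψ.trans (List.prefix_append ρ [e]), hmem⟩
    · refine ⟨ρ ++ [e], List.prefix_refl _, ?_⟩
      rw [← List.append_assoc]
      exact ⟨isPath_of_mnorm_Tp_pos hT, by simp, hρ,
        by rwa [List.dropLast_concat, ← not_lt], hT⟩

theorem exists_mnorm_Tp_prefix_le {ι : Type*} [Fintype ι] (ρ : ι → List G.E) :
    ∃ C, 0 ≤ C ∧ ∀ m ψ, ψ <+: ρ m → G.mnorm (G.Tp ψ) ≤ C := by
  refine ⟨∑ m, ∑ ψ ∈ (ρ m).inits.toFinset, G.mnorm (G.Tp ψ),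
    Finset.sum_nonneg fun _ _ => Finset.sum_nonneg fun ψ _ => mnorm_Tp_nonneg ψ,
    fun m ψ hψ => ?_⟩
  calc G.mnorm (G.Tp ψ) ≤ ∑ ψ ∈ (ρ m).inits.toFinset, G.mnorm (G.Tp ψ) :=
        Finset.single_le_sum (f := fun ψ => G.mnorm (G.Tp ψ)) (fun ψ _ => mnorm_Tp_nonneg ψ)
          (List.mem_toFinset.mpr ((List.mem_inits _ _).mpr hψ))
    _ ≤ ∑ m, ∑ ψ ∈ (ρ m).inits.toFinset, G.mnorm (G.Tp ψ) :=
        Finset.single_le_sum (f := fun m => ∑ ψ ∈ (ρ m).inits.toFinset, G.mnorm (G.Tp ψ))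
          (fun _ _ => Finset.sum_nonneg fun ψ _ => mnorm_Tp_nonneg ψ) (Finset.mem_univ m)

theorem Irreducible.exists_Tp_apply_pos (h : G.Irreducible) (j k : G.Idx) :
    ∃ φ : List G.E, φ ≠ [] ∧ 0 < G.Tp φ j k := by
  obtain ⟨H, hH⟩ := h
  obtain ⟨φ, -, ⟨-, ⟨e, he, -⟩, -⟩, hφ⟩ := hH j.1 k.1 j.2 k.2
  exact ⟨φ, by rintro rfl; simp at he, hφ⟩

end GMPS

theorem gmps_sigma_concat_estimate_general (G : GMPS)
    (hirr : G.Irreducible) :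
    ∃ A r : ℝ, 0 < A ∧ 0 < r ∧
      ∀ t₁ ∈ Set.Ioo (0:ℝ) 1, ∀ t₂ ∈ Set.Ioo (0:ℝ) 1,
        ∀ η₁ ∈ G.SigmaT t₁, ∀ η₂ ∈ G.SigmaT t₂,
          ∃ φ ψ : List G.E, (η₁ ++ φ ++ η₂ ++ ψ) ∈ G.SigmaT (t₁ * t₂ * r) ∧
            G.mnorm (G.Tp (η₁ ++ φ ++ η₂ ++ ψ)) ≤
              A * G.mnorm (G.Tp η₁) * G.mnorm (G.Tp η₂) := by
  choose φ hφne hφpos using fun jk : G.Idx × G.Idx => hirr.exists_Tp_apply_pos jk.1 jk.2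
  obtain ⟨c, hc, hcW⟩ := exists_pos_le_of_finite G.W_pos
  obtain ⟨c', hc', hc'φ⟩ := exists_pos_le_of_finite fun jk => G.Wp_pos (φ jk)
  have hr : 0 < c * c * c' := by positivity
  choose ρ hρpos hρW using fun m => G.exists_loop_Wp_lt (hφne (m, m)) (hφpos (m, m)) hr
  obtain ⟨Cφ, hCφ, hφC⟩ := G.exists_mnorm_Tp_prefix_le φ
  obtain ⟨Cψ, hCψ, hψC⟩ := G.exists_mnorm_Tp_prefix_le ρ
  refine ⟨Cφ * Cψ + 1, _, by positivity, hr, ?_⟩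
  rintro t₁ ⟨ht₁, -⟩ t₂ ⟨ht₂, -⟩ η₁ hη₁ η₂ hη₂
  obtain ⟨i, j, hij⟩ := Matrix.exists_apply_pos_of_sum_sum_pos hη₁.2.2.2.2
  obtain ⟨k, m, hkm⟩ := Matrix.exists_apply_pos_of_sum_sum_pos hη₂.2.2.2.2
  have hT : 0 < G.Tp (η₁ ++ φ (j, k) ++ η₂ ++ ρ m) i m := G.Tp_append_apply_pos
    (G.Tp_append_apply_pos (G.Tp_append_apply_pos hij (hφpos (j, k))) hkm) (hρpos m)
  obtain ⟨ψ, hψ, hmem⟩ := G.exists_prefix_append_mem_SigmaT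
    (G.mul_le_Wp_append_append hη₁ hη₂ ht₂.le hc.le hcW hc'.le (hc'φ (j, k)))
    (G.Wp_append_append_append_lt hη₁ hη₂ (hρW m)) (hT.trans_le (G.Tp_apply_le_mnorm _ i m))
  refine ⟨φ (j, k), ψ, hmem, ?_⟩
  calc G.mnorm (G.Tp (η₁ ++ φ (j, k) ++ η₂ ++ ψ))
      ≤ G.mnorm (G.Tp η₁) * Cφ * G.mnorm (G.Tp η₂) * Cψ :=
        G.mnorm_Tp_append_le_of_le (G.mnorm_Tp_append_le_of_le (G.mnorm_Tp_append_le_of_le le_rfl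
          (hφC (j, k) _ List.prefix_rfl)) le_rfl) (hψC m ψ hψ)
    _ ≤ (Cφ * Cψ + 1) * G.mnorm (G.Tp η₁) * G.mnorm (G.Tp η₂) := by
      nlinarith [mul_nonneg (G.mnorm_Tp_nonneg η₁) (G.mnorm_Tp_nonneg η₂)]

/-- In an irreducible matrix product system there are constants `A, r > 0` such
that for all `t₁, t₂ ∈ (0,1)`, `η₁ ∈ Σ_{t₁}` and `η₂ ∈ Σ_{t₂}`, there are paths
`φ, ψ` with `η₁φη₂ψ ∈ Σ_{t₁t₂r}` and `‖T(η₁φη₂ψ)‖ ≤ A ‖T(η₁)‖ ‖T(η₂)‖`. -/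
theorem gmps_sigma_concat_estimate (G : GMPS) (hsc : G.StronglyConnected)
    (hirr : G.Irreducible) :
    ∃ A r : ℝ, 0 < A ∧ 0 < r ∧
      ∀ t₁ ∈ Set.Ioo (0:ℝ) 1, ∀ t₂ ∈ Set.Ioo (0:ℝ) 1,
        ∀ η₁ ∈ G.SigmaT t₁, ∀ η₂ ∈ G.SigmaT t₂,
          ∃ φ ψ : List G.E, (η₁ ++ φ ++ η₂ ++ ψ) ∈ G.SigmaT (t₁ * t₂ * r) ∧
            G.mnorm (G.Tp (η₁ ++ φ ++ η₂ ++ ψ)) ≤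
              A * G.mnorm (G.Tp η₁) * G.mnorm (G.Tp η₂) :=
  gmps_sigma_concat_estimate_general G hirr
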